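/- For any ρ ∈ Pₙ and ⋆-self-dual ι ∈ Pₙ with r(ρ ∘ ι) = r(ι), one has (ρ ∘ ι ∘ ρ⋆) ∘ (ρ ∘ ι ∘ ρ⋆) ∘ ρ ∘ ι = ρ ∘ ι. -/

import Mathlib

open scoped Classical
open Relation
noncomputable section

/-- Vertices of a diagram: `inl` = unprimed points `n̄`, `inr` = primed points `n̄'`. -/
abbrev DVert (n : ℕ) := Fin n ⊕ Fin n

/-- Tripled vertex set used for gluing: bottom (unprimed of the right factor),
middle (identified vertices), top (primed of the left factor). -/
abbrev TVert (n : ℕ) := Fin n ⊕ (Fin n ⊕ Fin n)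

def embBot (n : ℕ) : DVert n → TVert n := Sum.elim Sum.inl (fun i => Sum.inr (Sum.inl i))
def embTop (n : ℕ) : DVert n → TVert n :=
  Sum.elim (fun i => Sum.inr (Sum.inl i)) (fun i => Sum.inr (Sum.inr i))
def embOut (n : ℕ) : DVert n → TVert n := Sum.elim Sum.inl (fun i => Sum.inr (Sum.inr i))

/-- The minimal equivalence relation `χ` on the tripled vertex set containing
(the embedded copies of) `τ` and `ρ`. -/
def glue (n : ℕ) (τ ρ : Setoid (DVert n)) : Setoid (TVert n) :=
  EqvGen.setoid (fun x y =>
    (∃ a b, ρ.r a b ∧ x = embBot n a ∧ y = embBot n b) ∨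
    (∃ a b, τ.r a b ∧ x = embTop n a ∧ y = embTop n b))

/-- Composition `τ ∘ ρ` in the partition monoid: glue and restrict to the outer vertices. -/
def pcomp (n : ℕ) (τ ρ : Setoid (DVert n)) : Setoid (DVert n) where
  r x y := (glue n τ ρ).r (embOut n x) (embOut n y)
  iseqv := ⟨fun _ => (glue n τ ρ).iseqv.refl _, fun h => (glue n τ ρ).iseqv.symm h,
    fun h₁ h₂ => (glue n τ ρ).iseqv.trans h₁ h₂⟩

/-- A middle vertex of the tripled vertex set. -/
def isMiddle {n : ℕ} (x : TVert n) : Prop := ∃ i, x = Sum.inr (Sum.inl i)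

/-- `c(τ,ρ)`: the number of classes of the glued relation contained in the middle row. -/
def ccount (n : ℕ) (τ ρ : Setoid (DVert n)) : ℕ :=
  {C ∈ (glue n τ ρ).classes | ∀ x ∈ C, isMiddle x}.ncard

/-- A propagating part: one meeting both the unprimed and the primed vertices. -/
def IsPropagating {n : ℕ} (C : Set (DVert n)) : Prop :=
  (∃ i, Sum.inl i ∈ C) ∧ (∃ i, Sum.inr i ∈ C)

/-- The rank `r(σ)`: the number of propagating parts of `σ`. -/
def prank (n : ℕ) (σ : Setoid (DVert n)) : ℕ :=
  {C ∈ σ.classes | IsPropagating C}.ncard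

/-- The anti-involution `⋆` swapping primed and unprimed vertices. -/
def pstar (n : ℕ) (σ : Setoid (DVert n)) : Setoid (DVert n) where
  r x y := σ.r x.swap y.swap
  iseqv := ⟨fun _ => σ.iseqv.refl _, fun h => σ.iseqv.symm h,
    fun h₁ h₂ => σ.iseqv.trans h₁ h₂⟩

/-- Minimal unprimed vertex of a part. -/
def minL {n : ℕ} (C : Set (DVert n)) : ℕ :=
  sInf {m : ℕ | ∃ j : Fin n, (j : ℕ) = m ∧ Sum.inl j ∈ C}

/-- Minimal primed vertex of a part. -/
def minR {n : ℕ} (C : Set (DVert n)) : ℕ :=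
  sInf {m : ℕ | ∃ j : Fin n, (j : ℕ) = m ∧ Sum.inr j ∈ C}

/-- Position of a propagating part `C` of `σ` in the ordering (by minimal elements) of the
intersections of the propagating parts with the unprimed vertices. -/
def posL (n : ℕ) (σ : Setoid (DVert n)) (C : Set (DVert n)) : ℕ :=
  {D ∈ σ.classes | IsPropagating D ∧ minL D < minL C}.ncard

/-- Position of a propagating part `C` of `σ` in the ordering (by minimal elements) of the
intersections of the propagating parts with the primed vertices. -/
def posR (n : ℕ) (σ : Setoid (DVert n)) (C : Set (DVert n)) : ℕ :=
  {D ∈ σ.classes | IsPropagating D ∧ minR D < minR C}.ncard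

/-- The permutation `π_σ ∈ S_k` recording how propagating lines connect the two sides of `σ`
(for a diagram of rank `k`): the unique permutation sending the position of a propagating part
on the unprimed side to its position on the primed side. -/
def permAt (n k : ℕ) (σ : Setoid (DVert n)) : Equiv.Perm (Fin k) :=
  Classical.epsilon (fun π : Equiv.Perm (Fin k) =>
    ∀ C ∈ σ.classes, IsPropagating C → ∀ h : posL n σ C < k,
      ((π ⟨posL n σ C, h⟩ : Fin k) : ℕ) = posR n σ C)

/-- The product of the partition algebra `𝐏ₙ(δ)` on the free vector space on diagrams. -/
def pmul (n : ℕ) (δ : ℂ) (f g : Setoid (DVert n) →₀ ℂ) : Setoid (DVert n) →₀ ℂ :=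
  f.sum fun τ a => g.sum fun ρ b =>
    Finsupp.single (pcomp n τ ρ) (δ ^ ccount n τ ρ * (a * b))

/-- `i(π,s)`: the number of pairs `i < j` with `s i = j` and `π i > π j`. -/
def icount (n : ℕ) (π s : Equiv.Perm (Fin n)) : ℕ :=
  (Finset.univ.filter fun p : Fin n × Fin n => p.1 < p.2 ∧ s p.1 = p.2 ∧ π p.2 < π p.1).card

/-!
Write `σ = ρ ∘ ι`. Unprimed vertices related in `ι` stay related in `σ`, and the unprimed
vertices of a propagating part of `σ` lie in propagating parts of `ι`. Hence sending a propagating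
part of `ι` to the part of `σ` containing its unprimed vertices reaches every propagating part
of `σ`; when `r(σ) = r(ι)` it is a bijection onto them. So `σ` and `ι` have the same kernel on
the unprimed vertices and the same propagating unprimed vertices. The projection `σ⋆ ∘ σ`
depends only on these data (two copies of that kernel glued along the propagating parts), so
`σ⋆ ∘ σ = ι⋆ ∘ ι = ι ∘ ι`, and
`(σρ⋆)(σρ⋆)σ = ρ (σ⋆σ) ρ⋆σ = ρι (ιρ⋆σ) = σ (σ⋆σ) = σ`,
the last step being the regularity `σ σ⋆ σ = σ`.

Associativity of `∘` holds because `a ∘ (b ∘ c)` is the gluing of the three diagrams in four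
rows restricted to the outer rows; `(a ∘ b) ∘ c` reduces to this by `⋆`.
-/

theorem Relation.EqvGen.of_or_of_notMem {α : Type*} (p : Setoid α) {r s : α → α → Prop}
    {H : Set α} (hrp : ∀ x y, r x y → p x y) (hs : ∀ x y, s x y → x ∉ H ∧ y ∉ H) {x y : α}
    (h : EqvGen (fun x y => r x y ∨ s x y) x y) (hx : x ∉ H) (hy : y ∉ H) :
    EqvGen (fun x y => (x ∉ H ∧ y ∉ H ∧ p x y) ∨ s x y) x y := by
  let Q := EqvGen.setoid fun x y => (x ∉ H ∧ y ∉ H ∧ p x y) ∨ s x y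
  have hpQ {x y : α} (hx : x ∉ H) (hy : y ∉ H) (h : p x y) : Q x y :=
    EqvGen.rel _ _ (Or.inl ⟨hx, hy, h⟩)
  -- `E` is an equivalence containing `r` and `s`, and between vertices outside `H` it implies `Q`.
  let E : Setoid α :=
    { r := fun x y => p x y ∨ ∃ x' ∉ H, ∃ y' ∉ H, p x x' ∧ Q x' y' ∧ p y' y
      iseqv :=
        { refl := fun x => Or.inl (p.refl' x)
          symm := by
            rintro x y (h | ⟨x', hx', y', hy', h₁, h₂, h₃⟩)
            · exact Or.inl (p.symm' h)
            · exact Or.inr ⟨y', hy', x', hx', p.symm' h₃, Q.symm' h₂, p.symm' h₁⟩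
          trans := by
            rintro x y z (h | ⟨x', hx', y', hy', f₁, f₂, f₃⟩)
              (h' | ⟨y'', hy'', z', hz', g₁, g₂, g₃⟩)
            · exact Or.inl (p.trans' h h')
            · exact Or.inr ⟨y'', hy'', z', hz', p.trans' h g₁, g₂, g₃⟩
            · exact Or.inr ⟨x', hx', y', hy', f₁, f₂, p.trans' f₃ h'⟩
            · exact Or.inr ⟨x', hx', z', hz', f₁,
                Q.trans' f₂ (Q.trans' (hpQ hy' hy'' (p.trans' f₃ g₁)) g₂), g₃⟩ } }
  have hE : E x y := Setoid.eqvGen_le (s := E) (by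
    rintro u v (h | h)
    · exact Or.inl (hrp u v h)
    · exact Or.inr ⟨u, (hs u v h).1, v, (hs u v h).2, p.refl' u, EqvGen.rel _ _ (Or.inr h),
        p.refl' v⟩) h
  rcases hE with h | ⟨x', hx', y', hy', h₁, h₂, h₃⟩
  · exact hpQ hx hy h
  · exact Q.trans' (hpQ hx hx' h₁) (Q.trans' h₂ (hpQ hy' hy h₃))

section ImageCard

variable {α β γ : Type*} {f : α → β} {g : α → γ} {A : Set α}

theorem Set.ncard_image_pair_eq (hfg : ∀ x ∈ A, ∀ y ∈ A, f x = f y → g x = g y) :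
    ((fun x => (f x, g x)) '' A).ncard = (f '' A).ncard := by
  rw [← Set.InjOn.ncard_image (f := Prod.fst), Set.image_image]
  rintro _ ⟨x, hx, rfl⟩ _ ⟨y, hy, rfl⟩ h
  exact Prod.ext h (hfg x hx y hy h)

theorem Set.ncard_image_le_of_forall_eq (hA : A.Finite)
    (hfg : ∀ x ∈ A, ∀ y ∈ A, f x = f y → g x = g y) : (g '' A).ncard ≤ (f '' A).ncard := by
  rw [← Set.ncard_image_pair_eq hfg, ← Set.image_image Prod.snd (fun x => (f x, g x))]
  exact Set.ncard_image_le (hA.image _)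

theorem Set.eq_of_ncard_image_le_of_forall_eq (hA : A.Finite)
    (hfg : ∀ x ∈ A, ∀ y ∈ A, f x = f y → g x = g y) (hle : (f '' A).ncard ≤ (g '' A).ncard)
    {x y : α} (hx : x ∈ A) (hy : y ∈ A) (h : g x = g y) : f x = f y := by
  have hinj : Set.InjOn Prod.snd ((fun x => (f x, g x)) '' A) := by
    refine Set.injOn_of_ncard_image_eq ?_ (hA.image _)
    rw [Set.image_image, Set.ncard_image_pair_eq hfg]
    exact le_antisymm (Set.ncard_image_le_of_forall_eq hA hfg) hle
  exact congrArg Prod.fst (hinj ⟨x, hx, rfl⟩ ⟨y, hy, rfl⟩ h)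

end ImageCard

theorem Setoid.setOf_rel_eq_iff {α : Type*} (s : Setoid α) {x y : α} :
    {z | s z x} = {z | s z y} ↔ s x y := by
  refine ⟨fun h => ?_, fun h => Set.ext fun z => ⟨(s.trans' · h), (s.trans' · (s.symm' h))⟩⟩
  have : x ∈ {z | s z y} := h ▸ s.refl' x
  exact this

namespace PartitionMonoid

variable {n : ℕ}

section Glue

variable {τ ρ : Setoid (DVert n)}

theorem glue_embBot {u v : DVert n} (h : ρ u v) : glue n τ ρ (embBot n u) (embBot n v) :=
  EqvGen.rel _ _ (Or.inl ⟨u, v, h, rfl, rfl⟩)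

theorem glue_embTop {u v : DVert n} (h : τ u v) : glue n τ ρ (embTop n u) (embTop n v) :=
  EqvGen.rel _ _ (Or.inr ⟨u, v, h, rfl, rfl⟩)

theorem glue_le_comap {β : Type*} (t : Setoid β) (f : TVert n → β)
    (hbot : ∀ u v, ρ u v → t (f (embBot n u)) (f (embBot n v)))
    (htop : ∀ u v, τ u v → t (f (embTop n u)) (f (embTop n v))) :
    glue n τ ρ ≤ t.comap f :=
  Setoid.eqvGen_le <| by
    rintro _ _ (⟨u, v, h, rfl, rfl⟩ | ⟨u, v, h, rfl, rfl⟩)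
    exacts [hbot u v h, htop u v h]

theorem pcomp_inl_of_rel {i j : Fin n} (h : ρ (.inl i) (.inl j)) :
    pcomp n τ ρ (.inl i) (.inl j) :=
  glue_embBot h

end Glue

section Star

theorem pstar_apply (a : Setoid (DVert n)) (x y : DVert n) : pstar n a x y ↔ a x.swap y.swap :=
  Iff.rfl

theorem pstar_pstar (a : Setoid (DVert n)) : pstar n (pstar n a) = a :=
  Setoid.ext fun x y => by simp only [pstar_apply, Sum.swap_swap]

theorem pstar_swap_iff (a : Setoid (DVert n)) {x y : DVert n} :
    pstar n a x.swap y.swap ↔ a x y := by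
  simp only [pstar_apply, Sum.swap_swap]

def flipT : TVert n → TVert n
  | .inl i => .inr (.inr i)
  | .inr (.inl m) => .inr (.inl m)
  | .inr (.inr i) => .inl i

theorem flipT_embBot (u : DVert n) : flipT (embBot n u) = embTop n u.swap := by cases u <;> rfl
theorem flipT_embTop (u : DVert n) : flipT (embTop n u) = embBot n u.swap := by cases u <;> rfl
theorem flipT_embOut (u : DVert n) : flipT (embOut n u) = embOut n u.swap := by cases u <;> rfl

theorem glue_le_comap_flipT (a b : Setoid (DVert n)) :
    glue n a b ≤ (glue n (pstar n b) (pstar n a)).comap flipT :=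
  glue_le_comap _ _
    (fun u v h => by
      rw [Setoid.comap_rel, flipT_embBot, flipT_embBot]
      exact glue_embTop ((pstar_swap_iff b).2 h))
    (fun u v h => by
      rw [Setoid.comap_rel, flipT_embTop, flipT_embTop]
      exact glue_embBot ((pstar_swap_iff a).2 h))

theorem pstar_le_pcomp_pstar (a b : Setoid (DVert n)) :
    pstar n (pcomp n a b) ≤ pcomp n (pstar n b) (pstar n a) := fun x y h => by
  have := glue_le_comap_flipT a b h
  rwa [Setoid.comap_rel, flipT_embOut, flipT_embOut, Sum.swap_swap, Sum.swap_swap] at this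

theorem pstar_pcomp (a b : Setoid (DVert n)) :
    pstar n (pcomp n a b) = pcomp n (pstar n b) (pstar n a) := by
  refine le_antisymm (pstar_le_pcomp_pstar a b) fun x y h => ?_
  have := pstar_le_pcomp_pstar (pstar n b) (pstar n a) (x := x.swap) (y := y.swap)
  rw [pstar_pstar, pstar_pstar, pstar_swap_iff] at this
  exact this h

end Star

section Assoc

/-- Four rows of vertices: rows 0, 1, 2 are the bottom, middle and top rows of `TVert n`, and
row 3 is `Sum.inr`. -/
abbrev QVert (n : ℕ) := TVert n ⊕ Fin n

def emb01 : DVert n → QVert n := Sum.inl ∘ embBot n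
def emb12 : DVert n → QVert n := Sum.inl ∘ embTop n
def emb23 : DVert n → QVert n := Sum.elim (fun i => .inl (.inr (.inr i))) .inr
def emb03 : DVert n → QVert n := Sum.elim (fun i => .inl (.inl i)) .inr

def glue4 (a b c : Setoid (DVert n)) : Setoid (QVert n) :=
  EqvGen.setoid fun x y =>
    (Relation.Map c emb01 emb01 x y ∨ Relation.Map b emb12 emb12 x y) ∨
      Relation.Map a emb23 emb23 x y

section Glue4

variable {a b c : Setoid (DVert n)} {u v : DVert n}

theorem glue4_emb01 (h : c u v) : glue4 a b c (emb01 u) (emb01 v) :=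
  EqvGen.rel _ _ (Or.inl (Or.inl ⟨u, v, h, rfl, rfl⟩))

theorem glue4_emb12 (h : b u v) : glue4 a b c (emb12 u) (emb12 v) :=
  EqvGen.rel _ _ (Or.inl (Or.inr ⟨u, v, h, rfl, rfl⟩))

theorem glue4_emb23 (h : a u v) : glue4 a b c (emb23 u) (emb23 v) :=
  EqvGen.rel _ _ (Or.inr ⟨u, v, h, rfl, rfl⟩)

theorem glue4_le_comap {β : Type*} (t : Setoid β) (f : QVert n → β)
    (hc : ∀ u v, c u v → t (f (emb01 u)) (f (emb01 v)))
    (hb : ∀ u v, b u v → t (f (emb12 u)) (f (emb12 v)))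
    (ha : ∀ u v, a u v → t (f (emb23 u)) (f (emb23 v))) :
    glue4 a b c ≤ t.comap f :=
  Setoid.eqvGen_le <| by
    rintro _ _ ((⟨u, v, h, rfl, rfl⟩ | ⟨u, v, h, rfl, rfl⟩) | ⟨u, v, h, rfl, rfl⟩)
    exacts [hc u v h, hb u v h, ha u v h]

end Glue4

def skip1 : TVert n → QVert n
  | .inl i => .inl (.inl i)
  | .inr (.inl m) => .inl (.inr (.inr m))
  | .inr (.inr i) => .inr i

def collapse1 : QVert n → TVert n
  | .inl (.inl i) => .inl i
  | .inl (.inr (.inl m)) => .inr (.inl m)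
  | .inl (.inr (.inr m)) => .inr (.inl m)
  | .inr i => .inr (.inr i)

theorem skip1_embBot (u : DVert n) : skip1 (embBot n u) = .inl (embOut n u) := by cases u <;> rfl
theorem skip1_embTop (u : DVert n) : skip1 (embTop n u) = emb23 u := by cases u <;> rfl
theorem skip1_embOut (u : DVert n) : skip1 (embOut n u) = emb03 u := by cases u <;> rfl
theorem collapse1_inl_embOut (u : DVert n) : collapse1 (.inl (embOut n u)) = embBot n u := by
  cases u <;> rfl
theorem collapse1_emb23 (u : DVert n) : collapse1 (emb23 u) = embTop n u := by cases u <;> rfl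
theorem collapse1_emb03 (u : DVert n) : collapse1 (emb03 u) = embOut n u := by cases u <;> rfl

theorem exists_embOut_of_not_isMiddle {x : TVert n} (hx : ¬isMiddle x) :
    ∃ u, x = embOut n u := by
  rcases x with i | m | i
  · exact ⟨.inl i, rfl⟩
  · exact absurd ⟨m, rfl⟩ hx
  · exact ⟨.inr i, rfl⟩

variable (a b c : Setoid (DVert n))

theorem glue_le_comap_inl_glue4 : glue n b c ≤ (glue4 a b c).comap Sum.inl :=
  glue_le_comap _ _ (fun _ _ => glue4_emb01) (fun _ _ => glue4_emb12)

theorem pcomp_pcomp_le_comap_glue4 :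
    pcomp n a (pcomp n b c) ≤ (glue4 a b c).comap emb03 := fun x y h => by
  have := glue_le_comap (glue4 a b c) skip1
    (fun u v h => by
      rw [skip1_embBot, skip1_embBot]
      exact glue_le_comap_inl_glue4 a b c h)
    (fun u v h => by
      rw [skip1_embTop, skip1_embTop]
      exact glue4_emb23 h) h
  rwa [Setoid.comap_rel, skip1_embOut, skip1_embOut] at this

theorem comap_glue4_le_pcomp_pcomp :
    (glue4 a b c).comap emb03 ≤ pcomp n a (pcomp n b c) := fun x y h => by
  let H : Set (QVert n) := Sum.inl '' {x | isMiddle x}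
  have hH : ∀ {x : TVert n}, Sum.inl x ∉ H → ¬isMiddle x := by simp [H]
  have hemb23 : ∀ u, emb23 u ∉ H := by rintro (i | i) <;> simp [H, emb23, isMiddle]
  have hemb03 : ∀ u, emb03 u ∉ H := by rintro (i | i) <;> simp [H, emb03, isMiddle]
  -- Row 1 is met only by edges of `b` and `c`, and on rows 0, 1, 2 these generate `glue n b c`.
  let p : Setoid (QVert n) := Setoid.ker (Sum.map (Quotient.mk (glue n b c)) id)
  have hlow : ∀ u v, Relation.Map c emb01 emb01 u v ∨ Relation.Map b emb12 emb12 u v → p u v := by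
    rintro _ _ (⟨u, v, huv, rfl, rfl⟩ | ⟨u, v, huv, rfl, rfl⟩)
    · exact congrArg Sum.inl (Quotient.sound (glue_embBot huv))
    · exact congrArg Sum.inl (Quotient.sound (glue_embTop huv))
  have hup : ∀ u v, Relation.Map a emb23 emb23 u v → u ∉ H ∧ v ∉ H := by
    rintro _ _ ⟨u, v, -, rfl, rfl⟩
    exact ⟨hemb23 u, hemb23 v⟩
  have hshort := Relation.EqvGen.of_or_of_notMem p hlow hup h (hemb03 x) (hemb03 y)
  have := Setoid.eqvGen_le (s := (glue n a (pcomp n b c)).comap collapse1) (by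
    rintro u v (⟨hu, hv, huv⟩ | ⟨u, v, huv, rfl, rfl⟩)
    · rw [Setoid.comap_rel]
      rcases u with u | i <;> rcases v with v | j <;>
        simp only [p, Setoid.ker_def, Sum.map_inl, Sum.map_inr, Sum.inl.injEq, Sum.inr.injEq,
          id, Quotient.eq, reduceCtorEq] at huv
      · obtain ⟨u, rfl⟩ := exists_embOut_of_not_isMiddle (hH hu)
        obtain ⟨v, rfl⟩ := exists_embOut_of_not_isMiddle (hH hv)
        rw [collapse1_inl_embOut, collapse1_inl_embOut]
        exact glue_embBot huv
      · rw [huv]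
    · rw [Setoid.comap_rel, collapse1_emb23, collapse1_emb23]
      exact glue_embTop huv) hshort
  rwa [Setoid.comap_rel, collapse1_emb03, collapse1_emb03] at this

theorem pcomp_pcomp_eq_comap_glue4 : pcomp n a (pcomp n b c) = (glue4 a b c).comap emb03 :=
  le_antisymm (pcomp_pcomp_le_comap_glue4 a b c) (comap_glue4_le_pcomp_pcomp a b c)

def flipQ : QVert n → QVert n
  | .inl (.inl i) => .inr i
  | .inl (.inr (.inl m)) => .inl (.inr (.inr m))
  | .inl (.inr (.inr m)) => .inl (.inr (.inl m))
  | .inr i => .inl (.inl i)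

theorem flipQ_emb01 (u : DVert n) : flipQ (emb01 u) = emb23 u.swap := by cases u <;> rfl
theorem flipQ_emb12 (u : DVert n) : flipQ (emb12 u) = emb12 u.swap := by cases u <;> rfl
theorem flipQ_emb23 (u : DVert n) : flipQ (emb23 u) = emb01 u.swap := by cases u <;> rfl
theorem flipQ_emb03 (u : DVert n) : flipQ (emb03 u) = emb03 u.swap := by cases u <;> rfl

theorem glue4_le_comap_flipQ :
    glue4 a b c ≤ (glue4 (pstar n c) (pstar n b) (pstar n a)).comap flipQ :=
  glue4_le_comap _ _
    (fun u v h => by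
      rw [Setoid.comap_rel, flipQ_emb01, flipQ_emb01]
      exact glue4_emb23 ((pstar_swap_iff c).2 h))
    (fun u v h => by
      rw [Setoid.comap_rel, flipQ_emb12, flipQ_emb12]
      exact glue4_emb12 ((pstar_swap_iff b).2 h))
    (fun u v h => by
      rw [Setoid.comap_rel, flipQ_emb23, flipQ_emb23]
      exact glue4_emb01 ((pstar_swap_iff a).2 h))

theorem comap_glue4_le_pstar :
    (glue4 a b c).comap emb03 ≤
      pstar n ((glue4 (pstar n c) (pstar n b) (pstar n a)).comap emb03) := fun x y h => by
  have := glue4_le_comap_flipQ a b c h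
  rwa [Setoid.comap_rel, flipQ_emb03, flipQ_emb03] at this

theorem pstar_comap_glue4 :
    pstar n ((glue4 (pstar n c) (pstar n b) (pstar n a)).comap emb03) =
      (glue4 a b c).comap emb03 := by
  refine le_antisymm (fun x y h => ?_) (comap_glue4_le_pstar a b c)
  have := comap_glue4_le_pstar (pstar n c) (pstar n b) (pstar n a) (x := x.swap) (y := y.swap)
  rw [pstar_pstar, pstar_pstar, pstar_pstar, pstar_swap_iff] at this
  exact this h

theorem pcomp_assoc : pcomp n (pcomp n a b) c = pcomp n a (pcomp n b c) := by
  have h : pstar n (pcomp n (pcomp n a b) c) =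
      pcomp n (pstar n c) (pcomp n (pstar n b) (pstar n a)) := by
    rw [pstar_pcomp, pstar_pcomp]
  rw [← pstar_pstar (pcomp n (pcomp n a b) c), h, pcomp_pcomp_eq_comap_glue4, pstar_comap_glue4,
    pcomp_pcomp_eq_comap_glue4]

end Assoc

section Projection

def ReachesTop (a : Setoid (DVert n)) (x : DVert n) : Prop := ∃ m, a x (.inr m)

theorem ReachesTop.of_rel {a : Setoid (DVert n)} {x y : DVert n} (h : a x y)
    (hy : ReachesTop a y) : ReachesTop a x :=
  hy.imp fun _ hm => a.trans' h hm

/-- Two copies of `a`, labelled by `Bool`, glued along the parts that reach the primed vertices. -/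
def double (a : Setoid (DVert n)) : Setoid (DVert n × Bool) where
  r p q := a p.1 q.1 ∧ (ReachesTop a p.1 ∨ p.2 = q.2)
  iseqv :=
    { refl := fun p => ⟨a.refl' p.1, Or.inr rfl⟩
      symm := fun ⟨h, hl⟩ => ⟨a.symm' h, hl.imp (ReachesTop.of_rel (a.symm' h)) Eq.symm⟩
      trans := fun ⟨h, hl⟩ ⟨h', hl'⟩ => ⟨a.trans' h h', by
        rcases hl with hl | hl
        · exact Or.inl hl
        rcases hl' with hl' | hl'
        · exact Or.inl (ReachesTop.of_rel h hl')
        · exact Or.inr (hl.trans hl')⟩ }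

theorem double_apply (a : Setoid (DVert n)) (p q : DVert n × Bool) :
    double a p q ↔ a p.1 q.1 ∧ (ReachesTop a p.1 ∨ p.2 = q.2) :=
  Iff.rfl

/-- In the gluing of `pstar n a` on `a`, the top row is a mirror copy of the bottom row. -/
def foldT : TVert n → DVert n × Bool
  | .inl i => (.inl i, true)
  | .inr (.inl m) => (.inr m, true)
  | .inr (.inr i) => (.inl i, false)

def foldD (x : DVert n) : DVert n × Bool := (.inl (x.elim id id), x.isLeft)

theorem foldT_embOut (x : DVert n) : foldT (embOut n x) = foldD x := by cases x <;> rfl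

theorem glue_pstar_le_comap_double (a : Setoid (DVert n)) :
    glue n (pstar n a) a ≤ (double a).comap foldT :=
  glue_le_comap _ _
    (by rintro (i | m) (j | k) h <;> exact ⟨h, Or.inr rfl⟩)
    (by
      rintro (m | i) (k | j) h
      · exact ⟨h, Or.inr rfl⟩
      · exact ⟨h, Or.inl ⟨m, a.refl' _⟩⟩
      · exact ⟨h, Or.inl ⟨k, h⟩⟩
      · exact ⟨h, Or.inr rfl⟩)

theorem pcomp_pstar_self (a : Setoid (DVert n)) :
    pcomp n (pstar n a) a = (double a).comap foldD := by
  refine le_antisymm (fun x y h => ?_) ?_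
  · have := glue_pstar_le_comap_double a h
    rwa [Setoid.comap_rel, foldT_embOut, foldT_embOut] at this
  have hcross : ∀ i j, double a (foldD (.inl i)) (foldD (.inr j)) →
      pcomp n (pstar n a) a (.inl i) (.inr j) := by
    rintro i j ⟨hij, ⟨m, hm⟩ | hl⟩
    · have h₁ : glue n (pstar n a) a (embBot n (.inl i)) (embBot n (.inr m)) := glue_embBot hm
      have h₂ : glue n (pstar n a) a (embTop n (.inl m)) (embTop n (.inr i)) :=
        glue_embTop (a.symm' hm)
      have h₃ : glue n (pstar n a) a (embTop n (.inr i)) (embTop n (.inr j)) := glue_embTop hij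
      exact (glue n (pstar n a) a).trans' h₁ ((glue n (pstar n a) a).trans' h₂ h₃)
    · exact absurd hl Bool.noConfusion
  rintro (i | i) (j | j) h
  · exact glue_embBot (u := .inl i) (v := .inl j) h.1
  · exact hcross i j h
  · exact Setoid.symm' _ (hcross j i ((double a).symm' h))
  · exact glue_embTop (u := .inr i) (v := .inr j) h.1

def squashT : TVert n → DVert n
  | .inl i => .inl i
  | .inr (.inl m) => .inl m
  | .inr (.inr m) => .inr m

theorem squashT_embBot (u : DVert n) : squashT (embBot n u) = (foldD u).1 := by cases u <;> rfl
theorem squashT_embTop (u : DVert n) : squashT (embTop n u) = u := by cases u <;> rfl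
theorem squashT_embOut (u : DVert n) : squashT (embOut n u) = u := by cases u <;> rfl

theorem pcomp_pcomp_pstar_self (a : Setoid (DVert n)) :
    pcomp n a (pcomp n (pstar n a) a) = a := by
  refine le_antisymm (fun x y h => ?_) ?_
  · have := glue_le_comap a squashT
      (fun u v huv => by
        rw [squashT_embBot, squashT_embBot]
        rw [pcomp_pstar_self] at huv
        exact huv.1)
      (fun u v huv => by rwa [squashT_embTop, squashT_embTop]) h
    rwa [Setoid.comap_rel, squashT_embOut, squashT_embOut] at this
  have hcross : ∀ i j, a (.inl i) (.inr j) →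
      pcomp n a (pcomp n (pstar n a) a) (.inl i) (.inr j) := by
    intro i j h
    have hproj : pcomp n (pstar n a) a (.inl i) (.inr i) := by
      rw [pcomp_pstar_self]
      exact ⟨a.refl' _, Or.inl ⟨j, h⟩⟩
    have h₁ : glue n a (pcomp n (pstar n a) a) (embBot n (.inl i)) (embBot n (.inr i)) :=
      glue_embBot hproj
    have h₂ : glue n a (pcomp n (pstar n a) a) (embTop n (.inl i)) (embTop n (.inr j)) :=
      glue_embTop h
    exact (glue n a (pcomp n (pstar n a) a)).trans' h₁ h₂
  rintro (i | i) (j | j) h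
  · refine glue_embBot (u := .inl i) (v := .inl j) ?_
    rw [pcomp_pstar_self]
    exact ⟨h, Or.inr rfl⟩
  · exact hcross i j h
  · exact Setoid.symm' _ (hcross j i (a.symm' h))
  · exact glue_embTop (u := .inr i) (v := .inr j) h

end Projection

section Rank

def mergeTop (a : Setoid (DVert n)) : Setoid (DVert n) where
  r x y := a x y ∨ (ReachesTop a x ∧ ReachesTop a y)
  iseqv :=
    { refl := fun x => Or.inl (a.refl' x)
      symm := fun h => h.imp a.symm' And.symm
      trans := by
        rintro x y z (h | ⟨hx, hy⟩) (h' | ⟨hy', hz⟩)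
        · exact Or.inl (a.trans' h h')
        · exact Or.inr ⟨ReachesTop.of_rel h hy', hz⟩
        · exact Or.inr ⟨hx, ReachesTop.of_rel (a.symm' h') hy⟩
        · exact Or.inr ⟨hx, hz⟩ }

theorem pcomp_le_mergeTop (ρ ι : Setoid (DVert n)) : pcomp n ρ ι ≤ mergeTop ι := fun x y h => by
  let f : TVert n → DVert n := Sum.elim .inl (Sum.elim .inr .inr)
  have hbot : ∀ u, f (embBot n u) = u := by rintro (i | m) <;> rfl
  have hout : ∀ u, f (embOut n u) = u := by rintro (i | m) <;> rfl
  have := glue_le_comap (mergeTop ι) f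
    (fun u v huv => by rw [hbot, hbot]; exact Or.inl huv)
    (by rintro (m | i) (k | j) - <;> exact Or.inr ⟨⟨_, ι.refl' _⟩, ⟨_, ι.refl' _⟩⟩) h
  rwa [Setoid.comap_rel, hout, hout] at this

theorem prank_eq_ncard_image (s : Setoid (DVert n)) :
    prank n s = ((fun i => {z | s z (.inl i)}) '' {i | ReachesTop s (.inl i)}).ncard := by
  unfold prank
  congr 1
  ext C
  constructor
  · rintro ⟨⟨y, rfl⟩, ⟨i, hi⟩, ⟨m, hm⟩⟩
    exact ⟨i, ⟨m, s.trans' hi (s.symm' hm)⟩, (s.setOf_rel_eq_iff).2 hi⟩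
  · rintro ⟨i, ⟨m, hm⟩, rfl⟩
    exact ⟨s.mem_classes _, ⟨i, s.refl' _⟩, ⟨m, s.symm' hm⟩⟩

theorem pcomp_inl_iff_and_reachesTop_iff_of_prank_eq {ρ ι : Setoid (DVert n)}
    (hr : prank n (pcomp n ρ ι) = prank n ι) :
    (∀ i j, pcomp n ρ ι (.inl i) (.inl j) ↔ ι (.inl i) (.inl j)) ∧
      ∀ i, ReachesTop (pcomp n ρ ι) (.inl i) ↔ ReachesTop ι (.inl i) := by
  set σ := pcomp n ρ ι
  set A := {i | ReachesTop ι (.inl i)}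
  set B := {i | ReachesTop σ (.inl i)}
  set f := fun i => {z | ι z (.inl i)}
  set g := fun i => {z | σ z (.inl i)}
  have hBA : B ⊆ A := fun i ⟨m, hm⟩ => (pcomp_le_mergeTop ρ ι hm).elim (⟨m, ·⟩) (·.1)
  have hfg : ∀ i ∈ A, ∀ j ∈ A, f i = f j → g i = g j := fun i _ j _ h =>
    (σ.setOf_rel_eq_iff).2 (pcomp_inl_of_rel ((ι.setOf_rel_eq_iff).1 h))
  have hgf : (g '' A).ncard ≤ (f '' A).ncard := Set.ncard_image_le_of_forall_eq (Set.toFinite _) hfg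
  have hgBA : (g '' B).ncard ≤ (g '' A).ncard :=
    Set.ncard_le_ncard (Set.image_mono hBA) (Set.toFinite _)
  have hfB : (f '' A).ncard = (g '' B).ncard := by
    rw [← prank_eq_ncard_image, ← prank_eq_ncard_image, hr]
  -- `(g '' B).ncard ≤ (g '' A).ncard ≤ (f '' A).ncard = (g '' B).ncard`, so both are equalities.
  have himage : g '' B = g '' A :=
    Set.eq_of_subset_of_ncard_le (Set.image_mono hBA) (hgf.trans hfB.le) (Set.toFinite _)
  refine ⟨fun i j => ⟨fun h => ?_, pcomp_inl_of_rel⟩, fun i => ⟨(hBA ·), fun hi => ?_⟩⟩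
  · rcases pcomp_le_mergeTop ρ ι h with h | ⟨hi, hj⟩
    · exact h
    exact (ι.setOf_rel_eq_iff).1 (Set.eq_of_ncard_image_le_of_forall_eq (Set.toFinite _) hfg
      (hfB.trans_le hgBA) hi hj ((σ.setOf_rel_eq_iff).2 h))
  · obtain ⟨j, hj, hji⟩ := himage.symm ▸ Set.mem_image_of_mem g hi
    exact ReachesTop.of_rel ((σ.setOf_rel_eq_iff).1 hji.symm) hj

theorem pcomp_pstar_self_congr {a b : Setoid (DVert n)}
    (hrel : ∀ i j, a (.inl i) (.inl j) ↔ b (.inl i) (.inl j))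
    (htop : ∀ i, ReachesTop a (.inl i) ↔ ReachesTop b (.inl i)) :
    pcomp n (pstar n a) a = pcomp n (pstar n b) b := by
  rw [pcomp_pstar_self, pcomp_pstar_self]
  ext x y
  simp only [Setoid.comap_rel, double_apply, foldD, hrel, htop]

end Rank

end PartitionMonoid

open PartitionMonoid

/-- for `ι` `⋆`-self-dual with `r(ρ∘ι) = r(ι)`, one has
`(ρ∘ι∘ρ⋆)∘(ρ∘ι∘ρ⋆)∘ρ∘ι = ρ∘ι`. -/
theorem sandwich_identity (n : ℕ) (ρ ι : Setoid (DVert n))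
    (hι : pstar n ι = ι) (hr : prank n (pcomp n ρ ι) = prank n ι) :
    pcomp n (pcomp n (pcomp n (pcomp n ρ ι) (pstar n ρ))
        (pcomp n (pcomp n ρ ι) (pstar n ρ))) (pcomp n ρ ι) = pcomp n ρ ι := by
  have hstar : pstar n (pcomp n ρ ι) = pcomp n ι (pstar n ρ) := by rw [pstar_pcomp, hι]
  have hproj : pcomp n (pstar n (pcomp n ρ ι)) (pcomp n ρ ι) = pcomp n ι ι := by
    obtain ⟨hrel, htop⟩ := pcomp_inl_iff_and_reachesTop_iff_of_prank_eq hr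
    rw [pcomp_pstar_self_congr hrel htop, hι]
  calc _ = pcomp n ρ (pcomp n (pcomp n (pstar n (pcomp n ρ ι)) (pcomp n ρ ι))
          (pcomp n (pstar n ρ) (pcomp n ρ ι))) := by simp only [hstar, pcomp_assoc]
    _ = pcomp n ρ (pcomp n (pcomp n ι ι) (pcomp n (pstar n ρ) (pcomp n ρ ι))) := by rw [hproj]
    _ = pcomp n (pcomp n ρ ι) (pcomp n (pstar n (pcomp n ρ ι)) (pcomp n ρ ι)) := by
      simp only [hstar, pcomp_assoc]
    _ = pcomp n ρ ι := pcomp_pcomp_pstar_self _
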